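/- Let μ,ν>0 with Sc=ν/μ, let η>0, set κ_η=(η/ν³)^{1/6}, and fix constants c1,…,c5>0 with c4 ≤ Sc ≤ c5. Let t be a tracer spectrum (2D framework) with shell sums 𝐭, dissipation rate χ and wavenumber κ_θ, and let κ0 ≤ κf⁺ with 4κf⁺ ≤ κ_η. Assume: (i) for every κ∈[κf⁺,κ_η], c1·χ·η^{-1/3} ≤ 𝐭_{κ,2κ} ≤ c2·χ·η^{-1/3}; (ii) 𝐭_{κ0,∞} ≤ c3·𝐭_{κf⁺,κ_η}. Then there exist constants c,C>0 depending only on c1,…,c5 such that c·κ_η²/ln(κ_η/κf⁺) ≤ κ_θ² ≤ C·κ_η²/ln(κ_η/κf⁺). (The moderate-Schmidt-number computation of Section 5.2: κ_θ ∼ κ_η up to a logarithm.) -/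

import Mathlib

/-! The dyadic shells `[2ʲκf⁺, 2ʲ⁺¹κf⁺)` with `2ʲκf⁺ ≤ κ_η` number `N ≍ ln(κ_η/κf⁺)`, and by (i) each
carries `≍ χη^{-1/3}`; summing them and using (ii) gives `𝐭_{κ0,∞} ≍ χη^{-1/3} ln(κ_η/κf⁺)`.
As `t(0) = 0`, `𝐭_{κ0,∞}` is the total `L⁻² Σ t`, so `κ_θ² = χ / (μ 𝐭_{κ0,∞})`, and `κ_η² = η^{1/3}/ν`
rewrites this as `κ_θ² = Sc κ_η² χη^{-1/3} / 𝐭_{κ0,∞} ≍ κ_η² / ln(κ_η/κf⁺)`. -/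

open Real

/-- Euclidean norm of a lattice vector `k ∈ ℤ^d`. -/
noncomputable def knorm {d : ℕ} (k : Fin d → ℤ) : ℝ :=
  Real.sqrt (∑ i, ((k i : ℝ)) ^ 2)

/-- Shell sum `𝐭_{κ1,κ2}` (finite upper end). -/
noncomputable def shellSum (d : ℕ) (L κ0 : ℝ) (t : (Fin d → ℤ) → ℝ) (κ1 κ2 : ℝ) : ℝ :=
  L ^ (-(d : ℤ)) * ∑' k : Fin d → ℤ,
    (if κ1 ≤ κ0 * knorm k ∧ κ0 * knorm k < κ2 then t k else 0)

/-- Shell sum `𝐭_{κ1,∞}`. -/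
noncomputable def shellSumTop (d : ℕ) (L κ0 : ℝ) (t : (Fin d → ℤ) → ℝ) (κ1 : ℝ) : ℝ :=
  L ^ (-(d : ℤ)) * ∑' k : Fin d → ℤ, (if κ1 ≤ κ0 * knorm k then t k else 0)

/-- Tracer dissipation rate `χ = μ L^{-d} κ0² Σ_k |k|² t(k)`. -/
noncomputable def chiRate (d : ℕ) (L κ0 μ : ℝ) (t : (Fin d → ℤ) → ℝ) : ℝ :=
  μ * L ^ (-(d : ℤ)) * κ0 ^ 2 * ∑' k : Fin d → ℤ, knorm k ^ 2 * t k

/-- Indicator wavenumber squared, `κ_θ² = κ0² Σ|k|²t(k) / Σ t(k)`. -/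
noncomputable def kThetaSq (d : ℕ) (κ0 : ℝ) (t : (Fin d → ℤ) → ℝ) : ℝ :=
  κ0 ^ 2 * (∑' k : Fin d → ℤ, knorm k ^ 2 * t k) / (∑' k : Fin d → ℤ, t k)

/-- A (discrete) tracer spectrum: nonnegative, vanishing at `k = 0`, not identically
zero, and with `Σ (1+|k|²) t(k) < ∞`. -/
structure IsTracerSpectrum (d : ℕ) (t : (Fin d → ℤ) → ℝ) : Prop where
  nonneg : ∀ k, 0 ≤ t k
  map_zero : t 0 = 0
  exists_ne_zero : ∃ k, t k ≠ 0
  summable : Summable fun k : Fin d → ℤ => (1 + knorm k ^ 2) * t k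

lemma one_le_knorm {d : ℕ} {k : Fin d → ℤ} (hk : k ≠ 0) : 1 ≤ knorm k := by
  obtain ⟨i, hi⟩ := Function.ne_iff.mp hk
  have hsq : (1 : ℝ) ≤ (k i : ℝ) ^ 2 := by exact_mod_cast sq_pos_of_ne_zero hi
  exact Real.one_le_sqrt.mpr <| hsq.trans <|
    Finset.single_le_sum (f := fun j => (k j : ℝ) ^ 2) (fun j _ => sq_nonneg _) (Finset.mem_univ i)

namespace IsTracerSpectrum

variable {d : ℕ} {t : (Fin d → ℤ) → ℝ}

lemma summable_self (ht : IsTracerSpectrum d t) : Summable t :=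
  ht.summable.of_nonneg_of_le ht.nonneg fun k => le_mul_of_one_le_left (ht.nonneg k)
    (le_add_of_nonneg_right (sq_nonneg _))

lemma summable_ite (ht : IsTracerSpectrum d t) (p : (Fin d → ℤ) → Prop) [DecidablePred p] :
    Summable fun k => if p k then t k else 0 :=
  ht.summable_self.of_nonneg_of_le (fun k => by split_ifs <;> simp [ht.nonneg k])
    (fun k => by split_ifs <;> simp [ht.nonneg k])

lemma tsum_pos (ht : IsTracerSpectrum d t) : 0 < ∑' k, t k := by
  obtain ⟨k, hk⟩ := ht.exists_ne_zero
  exact ht.summable_self.tsum_pos ht.nonneg k ((ht.nonneg k).lt_of_ne' hk)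

end IsTracerSpectrum

section ShellSums

variable {d : ℕ} {L κ0 : ℝ} {t : (Fin d → ℤ) → ℝ}

lemma shellSum_self (κ : ℝ) : shellSum d L κ0 t κ κ = 0 := by
  rw [shellSum, tsum_congr fun k => if_neg fun h => lt_irrefl κ (h.1.trans_lt h.2), tsum_zero,
    mul_zero]

lemma shellSum_nonneg (hL : 0 < L) (ht : IsTracerSpectrum d t) (κ1 κ2 : ℝ) :
    0 ≤ shellSum d L κ0 t κ1 κ2 :=
  mul_nonneg (by positivity) <| tsum_nonneg fun k => by split_ifs <;> simp [ht.nonneg k]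

lemma shellSum_add (ht : IsTracerSpectrum d t) {κ1 κ2 κ3 : ℝ} (h12 : κ1 ≤ κ2) (h23 : κ2 ≤ κ3) :
    shellSum d L κ0 t κ1 κ3 = shellSum d L κ0 t κ1 κ2 + shellSum d L κ0 t κ2 κ3 := by
  rw [shellSum, shellSum, shellSum, ← mul_add, ← (ht.summable_ite _).tsum_add (ht.summable_ite _)]
  congr 1
  refine tsum_congr fun k => ?_
  split_ifs <;> grind

lemma shellSum_mono_right (hL : 0 < L) (ht : IsTracerSpectrum d t) {κ1 κ2 κ3 : ℝ}
    (h12 : κ1 ≤ κ2) (h23 : κ2 ≤ κ3) :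
    shellSum d L κ0 t κ1 κ2 ≤ shellSum d L κ0 t κ1 κ3 := by
  rw [shellSum_add ht h12 h23]
  exact le_add_of_nonneg_right (shellSum_nonneg hL ht _ _)

lemma shellSum_le_shellSumTop (hL : 0 < L) (ht : IsTracerSpectrum d t) {κ1 κ1' : ℝ}
    (h : κ1' ≤ κ1) (κ2 : ℝ) :
    shellSum d L κ0 t κ1 κ2 ≤ shellSumTop d L κ0 t κ1' := by
  refine mul_le_mul_of_nonneg_left ?_ (by positivity)
  refine (ht.summable_ite _).tsum_le_tsum (fun k => ?_) (ht.summable_ite _)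
  split_ifs with h1 h2
  exacts [le_rfl, absurd (h.trans h1.1) h2, ht.nonneg k, le_rfl]

lemma shellSumTop_self_eq (hκ0 : 0 < κ0) (ht0 : t 0 = 0) :
    shellSumTop d L κ0 t κ0 = L ^ (-(d : ℤ)) * ∑' k, t k := by
  rw [shellSumTop]
  congr 1
  refine tsum_congr fun k => ?_
  rcases eq_or_ne k 0 with rfl | hk
  · simp [ht0]
  · rw [if_pos (le_mul_of_one_le_right hκ0.le (one_le_knorm hk))]

lemma shellSumTop_self_pos (hL : 0 < L) (ht : IsTracerSpectrum d t) (hκ0 : 0 < κ0) :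
    0 < shellSumTop d L κ0 t κ0 := by
  rw [shellSumTop_self_eq hκ0 ht.map_zero]
  exact mul_pos (by positivity) ht.tsum_pos

lemma shellSum_dyadic (ht : IsTracerSpectrum d t) {κ : ℝ} (hκ : 0 ≤ κ) (n : ℕ) :
    shellSum d L κ0 t κ (2 ^ n * κ)
      = ∑ j ∈ Finset.range n, shellSum d L κ0 t (2 ^ j * κ) (2 * (2 ^ j * κ)) := by
  induction n with
  | zero => simp [shellSum_self]
  | succ n ih =>
    have hn : κ ≤ 2 ^ n * κ := le_mul_of_one_le_left hκ (one_le_pow₀ one_le_two)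
    rw [Finset.sum_range_succ, ← ih, ← shellSum_add ht hn (by linarith), pow_succ', mul_assoc]

end ShellSums

lemma exists_dyadic_index {r : ℝ} (hr : 2 ≤ r) :
    ∃ N : ℕ, 2 ^ N ≤ r ∧ r ≤ 2 ^ (N + 1) ∧
      (N + 1) * Real.log 2 ≤ 2 * Real.log r ∧ Real.log r ≤ 2 * N * Real.log 2 := by
  obtain ⟨N, hN, hN1⟩ := exists_nat_pow_near (one_le_two.trans hr) one_lt_two
  have hN_pos : 1 ≤ N := by
    by_contra! h
    obtain rfl : N = 0 := by omega
    norm_num at hN1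
    linarith
  have hlog_lower : N * Real.log 2 ≤ Real.log r := by
    rw [← Real.log_pow]
    exact Real.log_le_log (by positivity) hN
  have hlog_upper : Real.log r ≤ (N + 1) * Real.log 2 := by
    rw [← Nat.cast_succ, ← Real.log_pow]
    exact Real.log_le_log (by linarith) hN1.le
  have hN_pos' : (1 : ℝ) ≤ N := by exact_mod_cast hN_pos
  have hlog2 : 0 < Real.log 2 := Real.log_pos one_lt_two
  refine ⟨N, hN, hN1.le, ?_, ?_⟩ <;> nlinarith

section DyadicCount

variable {d : ℕ} {L κ0 : ℝ} {t : (Fin d → ℤ) → ℝ}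

lemma pow_two_mul_mem_Icc {κf κη : ℝ} {N j : ℕ} (hκf : 0 < κf) (hN : 2 ^ N * κf ≤ κη)
    (hj : j ≤ N) : 2 ^ j * κf ∈ Set.Icc κf κη :=
  ⟨le_mul_of_one_le_left hκf.le (one_le_pow₀ one_le_two),
    le_trans (by gcongr; exact one_le_two) hN⟩

lemma mul_log_le_shellSumTop (hL : 0 < L) (ht : IsTracerSpectrum d t) {a κ' κf κη : ℝ}
    (ha : 0 ≤ a) (hκ' : κ' ≤ κf) (hκf : 0 < κf) (h2 : 2 * κf ≤ κη)
    (hshell : ∀ κ, κf ≤ κ → κ ≤ κη → a ≤ shellSum d L κ0 t κ (2 * κ)) :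
    a * Real.log (κη / κf) ≤ 2 * Real.log 2 * shellSumTop d L κ0 t κ' := by
  obtain ⟨N, hN, -, -, hlog⟩ := exists_dyadic_index ((le_div_iff₀ hκf).2 h2)
  have hN : 2 ^ N * κf ≤ κη := (le_div_iff₀ hκf).1 hN
  have hsum : N * a ≤ shellSum d L κ0 t κf (2 ^ N * κf) := by
    rw [shellSum_dyadic ht hκf.le]
    simpa using Finset.card_nsmul_le_sum (Finset.range N) _ a fun j hj =>
      have hj := pow_two_mul_mem_Icc hκf hN (Finset.mem_range.1 hj).le
      hshell _ hj.1 hj.2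
  calc a * Real.log (κη / κf) ≤ a * (2 * N * Real.log 2) := by gcongr
    _ = 2 * Real.log 2 * (N * a) := by ring
    _ ≤ 2 * Real.log 2 * shellSumTop d L κ0 t κ' := by
      gcongr
      exact hsum.trans (shellSum_le_shellSumTop hL ht hκ' _)

lemma log_two_mul_shellSum_le (hL : 0 < L) (ht : IsTracerSpectrum d t) {b κf κη : ℝ}
    (hκf : 0 < κf) (h2 : 2 * κf ≤ κη)
    (hshell : ∀ κ, κf ≤ κ → κ ≤ κη → shellSum d L κ0 t κ (2 * κ) ≤ b) :
    Real.log 2 * shellSum d L κ0 t κf κη ≤ 2 * b * Real.log (κη / κf) := by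
  obtain ⟨N, hN, hN1, hlog, -⟩ := exists_dyadic_index ((le_div_iff₀ hκf).2 h2)
  have hN : 2 ^ N * κf ≤ κη := (le_div_iff₀ hκf).1 hN
  have hb : 0 ≤ b := (shellSum_nonneg hL ht _ _).trans (hshell κf le_rfl (by linarith))
  have hsum : shellSum d L κ0 t κf (2 ^ (N + 1) * κf) ≤ (N + 1) * b := by
    rw [shellSum_dyadic ht hκf.le]
    simpa using Finset.sum_le_card_nsmul (Finset.range (N + 1)) _ b fun j hj =>
      have hj := pow_two_mul_mem_Icc hκf hN (Nat.lt_succ_iff.1 (Finset.mem_range.1 hj))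
      hshell _ hj.1 hj.2
  calc Real.log 2 * shellSum d L κ0 t κf κη
      ≤ Real.log 2 * ((N + 1) * b) := by
        gcongr
        exact (shellSum_mono_right hL ht (by linarith) ((div_le_iff₀ hκf).1 hN1)).trans hsum
    _ = (N + 1) * Real.log 2 * b := by ring
    _ ≤ 2 * b * Real.log (κη / κf) := by nlinarith

end DyadicCount

lemma kThetaSq_eq_chiRate_div {d : ℕ} {L κ0 μ : ℝ} {t : (Fin d → ℤ) → ℝ} (hL : L ≠ 0)
    (hμ : μ ≠ 0) (hκ0 : 0 < κ0) (ht0 : t 0 = 0) :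
    kThetaSq d κ0 t = chiRate d L κ0 μ t / (μ * shellSumTop d L κ0 t κ0) := by
  rw [shellSumTop_self_eq hκ0 ht0, kThetaSq, chiRate, mul_assoc (μ * _), ← mul_assoc μ (L ^ _),
    mul_div_mul_left _ _ (mul_ne_zero hμ (zpow_ne_zero _ hL))]

lemma sq_rpow_one_sixth_div_cube {η ν : ℝ} (hη : 0 ≤ η) (hν : 0 < ν) :
    ((η / ν ^ 3) ^ (1 / 6 : ℝ)) ^ 2 = η ^ (1 / 3 : ℝ) / ν := by
  rw [← Real.rpow_natCast, ← Real.rpow_mul (by positivity), Real.div_rpow hη (by positivity),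
    ← Real.rpow_natCast ν 3, ← Real.rpow_mul hν.le]
  norm_num

lemma kThetaSq_eq_mul_div {d : ℕ} {L κ0 μ ν η : ℝ} {t : (Fin d → ℤ) → ℝ} (hL : L ≠ 0)
    (hμ : μ ≠ 0) (hν : 0 < ν) (hη : 0 < η) (hκ0 : 0 < κ0) (ht0 : t 0 = 0) :
    kThetaSq d κ0 t = ν / μ * ((η / ν ^ 3) ^ (1 / 6 : ℝ)) ^ 2 *
      (chiRate d L κ0 μ t * η ^ (-1 / 3 : ℝ) / shellSumTop d L κ0 t κ0) := by
  rw [kThetaSq_eq_chiRate_div hL hμ hκ0 ht0, sq_rpow_one_sixth_div_cube hη.le hν]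
  field_simp
  rw [mul_assoc, ← Real.rpow_add hη]
  norm_num

/-- Section 5.2, moderate Schmidt number: `κ_θ ∼ κ_η` up to a logarithm. -/
theorem tracer_2D_moderate_Schmidt
    (c1 c2 c3 c4 c5 : ℝ)
    (hc1 : 0 < c1) (hc2 : 0 < c2) (hc3 : 0 < c3) (hc4 : 0 < c4) (hc5 : 0 < c5) :
    ∃ c C : ℝ, 0 < c ∧ 0 < C ∧
      ∀ (L μ ν η κfp κ0 Sc κη χ : ℝ) (t : (Fin 2 → ℤ) → ℝ),
        0 < L → 0 < μ → 0 < ν → 0 < η →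
        IsTracerSpectrum 2 t →
        κ0 = 2 * π / L →
        Sc = ν / μ →
        c4 ≤ Sc → Sc ≤ c5 →
        κη = (η / ν ^ 3) ^ (1 / 6 : ℝ) →
        χ = chiRate 2 L κ0 μ t →
        κ0 ≤ κfp → 4 * κfp ≤ κη →
        (∀ κ, κfp ≤ κ → κ ≤ κη →
          c1 * χ * η ^ (-1 / 3 : ℝ) ≤ shellSum 2 L κ0 t κ (2 * κ) ∧
          shellSum 2 L κ0 t κ (2 * κ) ≤ c2 * χ * η ^ (-1 / 3 : ℝ)) →
        shellSumTop 2 L κ0 t κ0 ≤ c3 * shellSum 2 L κ0 t κfp κη →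
        c * κη ^ 2 / Real.log (κη / κfp) ≤ kThetaSq 2 κ0 t ∧
          kThetaSq 2 κ0 t ≤ C * κη ^ 2 / Real.log (κη / κfp) := by
  have hlog2 : 0 < Real.log 2 := Real.log_pos one_lt_two
  refine ⟨c4 * Real.log 2 / (2 * c2 * c3), 2 * Real.log 2 * c5 / c1, by positivity, by positivity,
    ?_⟩
  intro L μ ν η κfp κ0 Sc κη χ t hL hμ hν hη ht hκ0 hSc hSc4 hSc5 hκη hχ hκ0f h4 hshell htop
  have hκ0_pos : 0 < κ0 := hκ0 ▸ by positivity
  have hκf : 0 < κfp := hκ0_pos.trans_le hκ0f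
  have h2 : 2 * κfp ≤ κη := by linarith
  rw [kThetaSq_eq_mul_div hL.ne' hμ.ne' hν hη hκ0_pos ht.map_zero, ← hSc, ← hκη, ← hχ]
  set A := χ * η ^ (-1 / 3 : ℝ)
  set T := shellSumTop 2 L κ0 t κ0
  set ℓ := Real.log (κη / κfp)
  have hT : 0 < T := shellSumTop_self_pos hL ht hκ0_pos
  have hℓ : 0 < ℓ := Real.log_pos ((lt_div_iff₀ hκf).2 (by linarith))
  have hupper : Real.log 2 * T ≤ c3 * (2 * (c2 * A) * ℓ) := by
    refine (mul_le_mul_of_nonneg_left htop hlog2.le).trans_eq (mul_left_comm _ _ _) |>.trans ?_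
    exact mul_le_mul_of_nonneg_left (log_two_mul_shellSum_le hL ht hκf h2 fun κ h1 h2 =>
      (hshell κ h1 h2).2.trans_eq (mul_assoc _ _ _)) hc3.le
  have hA : 0 < A := by
    have : 0 < c3 * 2 * c2 * ℓ * A := by nlinarith
    exact pos_of_mul_pos_right this (by positivity)
  have hlower : c1 * A * ℓ ≤ 2 * Real.log 2 * T :=
    mul_log_le_shellSumTop hL ht (by positivity) hκ0f hκf h2 fun κ h1 h2 =>
      (mul_assoc _ _ _).symm.trans_le (hshell κ h1 h2).1
  have hratio_lower : Real.log 2 / (2 * c2 * c3 * ℓ) ≤ A / T := by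
    rw [div_le_div_iff₀ (by positivity) hT]
    linarith
  have hratio_upper : A / T ≤ 2 * Real.log 2 / (c1 * ℓ) := by
    rw [div_le_div_iff₀ hT (by positivity)]
    linarith
  have hSc_nonneg : 0 ≤ Sc := hc4.le.trans hSc4
  constructor
  · calc c4 * Real.log 2 / (2 * c2 * c3) * κη ^ 2 / ℓ
        = c4 * κη ^ 2 * (Real.log 2 / (2 * c2 * c3 * ℓ)) := by ring
      _ ≤ Sc * κη ^ 2 * (A / T) := by gcongr
  · calc Sc * κη ^ 2 * (A / T)
        ≤ c5 * κη ^ 2 * (2 * Real.log 2 / (c1 * ℓ)) := by gcongr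
      _ = 2 * Real.log 2 * c5 / c1 * κη ^ 2 / ℓ := by ring
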